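/- arXiv:2310.05761 — 6 statements merged into one kernel-verified Lean document; each statement's English description precedes it below -/
import Mathlib

section
/- Let W be a positive semi-definite symmetric m×m real matrix and G an m×q real matrix. If rank(G'WG) = rank(G), then the matrix P = G(G'WG)^† G'W satisfies P² = P, i.e., it is idempotent. -/
open Matrix

/-- The four Penrose conditions characterizing the Moore-Penrose pseudoinverse. -/
def IsMoorePenrose {m q : ℕ} (A : Matrix (Fin m) (Fin q) ℝ) (B : Matrix (Fin q) (Fin m) ℝ) : Prop :=
  A * B * A = A ∧ B * A * B = B ∧ (A * B)ᵀ = A * B ∧ (B * A)ᵀ = B * A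

theorem stmt_0 {m q : ℕ} (W : Matrix (Fin m) (Fin m) ℝ) (G : Matrix (Fin m) (Fin q) ℝ)
    (hW : W.PosSemidef) (hrank : (Gᵀ * W * G).rank = G.rank)
    (H : Matrix (Fin q) (Fin q) ℝ) (hH : IsMoorePenrose (Gᵀ * W * G) H) :
    (G * H * Gᵀ * W) * (G * H * Gᵀ * W) = G * H * Gᵀ * W := by
  obtain ⟨-, h2, -, -⟩ := hH
  have h2' : H * (Gᵀ * (W * G)) * H = H := by
    simpa only [Matrix.mul_assoc] using h2
  simp only [Matrix.mul_assoc]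
  rw [show W * (G * (H * (Gᵀ * W))) = W * G * (H * (Gᵀ * W)) from
        (Matrix.mul_assoc W G _).symm,
      show Gᵀ * (W * G * (H * (Gᵀ * W))) = Gᵀ * (W * G) * (H * (Gᵀ * W)) from
        (Matrix.mul_assoc Gᵀ (W * G) _).symm,
      show H * (Gᵀ * (W * G) * (H * (Gᵀ * W))) = H * (Gᵀ * (W * G)) * (H * (Gᵀ * W)) from
        (Matrix.mul_assoc H _ _).symm,
      ← Matrix.mul_assoc (H * (Gᵀ * (W * G))) H, h2']
end

section
/- Let E be a nonsingular m×m real matrix, Σ symmetric positive semi-definite m×m, W = (E Σ E')^†, and G an m×q real matrix with rank(G'WG) = rank(G). Define U = E'(W − W G (G'WG)^† G' W) E. Then Σ U Σ U Σ = Σ U Σ. -/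
open Matrix

theorem stmt_3 {m q : ℕ} (E S : Matrix (Fin m) (Fin m) ℝ) [Invertible E]
    (hS : S.PosSemidef) (W : Matrix (Fin m) (Fin m) ℝ)
    (hW : IsMoorePenrose (E * S * Eᵀ) W)
    (G : Matrix (Fin m) (Fin q) ℝ) (hrank : (Gᵀ * W * G).rank = G.rank)
    (H : Matrix (Fin q) (Fin q) ℝ) (hH : IsMoorePenrose (Gᵀ * W * G) H)
    (U : Matrix (Fin m) (Fin m) ℝ) (hU : U = Eᵀ * (W - W * G * H * Gᵀ * W) * E) :
    S * U * S * U * S = S * U * S := by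
  subst hU
  have h2 : W * (E * S * Eᵀ) * W = W := hW.2.1
  have h3 : H * (Gᵀ * W * G) * H = H := hH.2.1
  set X : Matrix (Fin m) (Fin m) ℝ := W * G * H * Gᵀ * W with hX
  have hWAX : W * (E * S * Eᵀ) * X = X := by
    calc W * (E * S * Eᵀ) * X = (W * (E * S * Eᵀ) * W) * (G * H * (Gᵀ * W)) := by
          rw [hX]; simp only [Matrix.mul_assoc]
      _ = W * (G * H * (Gᵀ * W)) := by rw [h2]
      _ = X := by rw [hX]; simp only [Matrix.mul_assoc]
  have hXAW : X * (E * S * Eᵀ) * W = X := by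
    calc X * (E * S * Eᵀ) * W = W * G * H * Gᵀ * (W * (E * S * Eᵀ) * W) := by
          rw [hX]; simp only [Matrix.mul_assoc]
      _ = W * G * H * Gᵀ * W := by rw [h2]
      _ = X := hX.symm
  have hXAX : X * (E * S * Eᵀ) * X = X := by
    calc X * (E * S * Eᵀ) * X
        = W * G * H * Gᵀ * (W * (E * S * Eᵀ) * W) * (G * H * (Gᵀ * W)) := by
          rw [hX]; simp only [Matrix.mul_assoc]
      _ = W * G * H * Gᵀ * W * (G * H * (Gᵀ * W)) := by rw [h2]
      _ = W * G * (H * (Gᵀ * W * G) * H) * (Gᵀ * W) := by simp only [Matrix.mul_assoc]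
      _ = W * G * H * (Gᵀ * W) := by rw [h3]
      _ = X := by rw [hX]; simp only [Matrix.mul_assoc]
  have key : (W - X) * (E * S * Eᵀ) * (W - X) = W - X := by
    rw [sub_mul, sub_mul, mul_sub, mul_sub, h2, hWAX, hXAW, hXAX]
    abel
  calc S * (Eᵀ * (W - X) * E) * S * (Eᵀ * (W - X) * E) * S
      = S * Eᵀ * ((W - X) * (E * S * Eᵀ) * (W - X)) * (E * S) := by
        simp only [Matrix.mul_assoc]
    _ = S * Eᵀ * (W - X) * (E * S) := by rw [key]
    _ = S * (Eᵀ * (W - X) * E) * S := by simp only [Matrix.mul_assoc]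
end

section
/- Let E be a nonsingular m×m real matrix, Σ symmetric positive semi-definite m×m, W = (E Σ E')^†, and G an m×q real matrix with rank(G'WG) = rank(G). Define U = E'(W − W G (G'WG)^† G' W) E. Then trace(U Σ) = rank(Σ) − rank(G). -/
open Matrix

/-- Trace of an idempotent real matrix equals its rank. -/
lemma trace_eq_rank_of_idem {n : ℕ} (P : Matrix (Fin n) (Fin n) ℝ) (h : P * P = P) :
    P.trace = (P.rank : ℝ) := by
  have hproj : LinearMap.IsProj (LinearMap.range P.mulVecLin) P.mulVecLin := by
    refine ⟨fun x => LinearMap.mem_range_self _ x, ?_⟩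
    rintro x ⟨y, rfl⟩
    have h' : (P * P).mulVecLin y = P.mulVecLin y := by rw [h]
    simpa [Matrix.mulVecLin_mul] using h'
  have ht := hproj.trace
  have htr : LinearMap.trace ℝ (Fin n → ℝ) P.mulVecLin = P.trace := by
    rw [LinearMap.trace_eq_matrix_trace ℝ (Pi.basisFun ℝ (Fin n)),
      LinearMap.toMatrix_eq_toMatrix']
    congr 1
    rw [← Matrix.toLin'_apply' P, LinearMap.toMatrix'_toLin']
  rw [← htr, ht, Matrix.rank]

theorem stmt_4 {m q : ℕ} (E S : Matrix (Fin m) (Fin m) ℝ) [Invertible E]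
    (hS : S.PosSemidef) (W : Matrix (Fin m) (Fin m) ℝ)
    (hW : IsMoorePenrose (E * S * Eᵀ) W)
    (G : Matrix (Fin m) (Fin q) ℝ) (hrank : (Gᵀ * W * G).rank = G.rank)
    (H : Matrix (Fin q) (Fin q) ℝ) (hH : IsMoorePenrose (Gᵀ * W * G) H)
    (U : Matrix (Fin m) (Fin m) ℝ) (hU : U = Eᵀ * (W - W * G * H * Gᵀ * W) * E) :
    (U * S).trace = (S.rank : ℝ) - (G.rank : ℝ) := by
  obtain ⟨hA1, hA2, hA3, hA4⟩ := hW
  obtain ⟨hB1, hB2, hB3, hB4⟩ := hH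
  set A : Matrix (Fin m) (Fin m) ℝ := E * S * Eᵀ with hA
  set B : Matrix (Fin q) (Fin q) ℝ := Gᵀ * W * G with hB
  set K : Matrix (Fin m) (Fin m) ℝ := W * G * H * Gᵀ * W with hK
  have hdetE : IsUnit E.det := isUnit_det_of_invertible E
  have hdetET : IsUnit Eᵀ.det := by rw [Matrix.det_transpose]; exact hdetE
  -- trace (U * S) = trace ((W - K) * A)
  have step1 : (U * S).trace = ((W - K) * A).trace := by
    rw [hU]
    have : Eᵀ * (W - K) * E * S = Eᵀ * ((W - K) * (E * S)) := by simp only [Matrix.mul_assoc]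
    rw [this, Matrix.trace_mul_comm]
    congr 1
    rw [hA, mul_assoc]
  -- trace (W * A) = rank S
  have idem1 : (W * A) * (W * A) = W * A := by
    have : (W * A) * (W * A) = W * (A * W * A) := by simp only [Matrix.mul_assoc]
    rw [this, hA1]
  have hr1 : (W * A).rank = A.rank := by
    refine le_antisymm (Matrix.rank_mul_le_right W A) ?_
    calc A.rank = (A * (W * A)).rank := by rw [← mul_assoc, hA1]
    _ ≤ (W * A).rank := Matrix.rank_mul_le_right _ _
  have hrA : A.rank = S.rank := by
    rw [hA, Matrix.rank_mul_eq_left_of_isUnit_det Eᵀ (E * S) hdetET,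
      Matrix.rank_mul_eq_right_of_isUnit_det E S hdetE]
  have t1 : (W * A).trace = (S.rank : ℝ) := by
    rw [trace_eq_rank_of_idem _ idem1, hr1, hrA]
  -- trace (K * A) = rank G
  have e1 : K * A = (W * G) * (H * Gᵀ * W * A) := by simp only [hK, Matrix.mul_assoc]
  have e2 : (H * Gᵀ * W * A) * (W * G) = H * B := by
    have h1 : (H * Gᵀ * W * A) * (W * G) = H * Gᵀ * (W * A * W) * G := by simp only [Matrix.mul_assoc]
    rw [h1, hA2, hB]
    simp only [Matrix.mul_assoc]
  have idem2 : (H * B) * (H * B) = H * B := by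
    have : (H * B) * (H * B) = H * (B * H * B) := by simp only [Matrix.mul_assoc]
    rw [this, hB1]
  have hr2 : (H * B).rank = B.rank := by
    refine le_antisymm (Matrix.rank_mul_le_right H B) ?_
    calc B.rank = (B * (H * B)).rank := by rw [← mul_assoc, hB1]
    _ ≤ (H * B).rank := Matrix.rank_mul_le_right _ _
  have t2 : (K * A).trace = (G.rank : ℝ) := by
    rw [e1, Matrix.trace_mul_comm, e2, trace_eq_rank_of_idem _ idem2, hr2, hB, hrank]
  rw [step1, sub_mul, Matrix.trace_sub, t1, t2]
end

section
/- Let W be a symmetric positive semi-definite m×m matrix and G an m×q matrix with rank(G'WG) = rank(G). Then the matrix B = I_m − G(G'WG)^† G' W satisfies B² = B. -/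
open Matrix

theorem stmt_7 {m q : ℕ} (W : Matrix (Fin m) (Fin m) ℝ) (G : Matrix (Fin m) (Fin q) ℝ)
    (hW : W.PosSemidef) (hrank : (Gᵀ * W * G).rank = G.rank)
    (H : Matrix (Fin q) (Fin q) ℝ) (hH : IsMoorePenrose (Gᵀ * W * G) H) :
    (1 - G * H * Gᵀ * W) * (1 - G * H * Gᵀ * W) = 1 - G * H * Gᵀ * W := by
  have h2 : H * (Gᵀ * W * G) * H = H := hH.2.1
  have key : G * H * Gᵀ * W * (G * H * Gᵀ * W) = G * H * Gᵀ * W := by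
    calc G * H * Gᵀ * W * (G * H * Gᵀ * W)
        = G * (H * (Gᵀ * W * G) * H) * Gᵀ * W := by simp only [Matrix.mul_assoc]
      _ = G * H * Gᵀ * W := by rw [h2]
  calc (1 - G * H * Gᵀ * W) * (1 - G * H * Gᵀ * W)
      = 1 - G * H * Gᵀ * W - G * H * Gᵀ * W + G * H * Gᵀ * W * (G * H * Gᵀ * W) := by
        noncomm_ring
    _ = 1 - G * H * Gᵀ * W := by rw [key]; noncomm_ring
end

section
/- Let M̂_n be a sequence of random m×m symmetric positive semi-definite matrices such that every eigenvalue λ̂_i of M̂_n corresponding to a zero population eigenvalue satisfies λ̂_i = O_P(1/n), and every eigenvalue corresponding to a nonzero population eigenvalue converges in probability to its (positive) population value. Let r̂_n = #{i : λ̂_i ≥ n^{−b}} for a fixed b ∈ (1/2, 1). Then r̂_n converges in probability to r = rank(M), the number of nonzero population eigenvalues. -/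
open Matrix MeasureTheory Filter

/-!
A sample eigenvalue is misclassified by the threshold `n^{-b}` in one of two ways. If its
population value is zero, it is `O_P(1/n)` while `n · n^{-b} = n^{1-b} → ∞`, so it exceeds the
threshold with vanishing probability. If its population value is positive, it converges in
probability to that value while `n^{-b} → 0`, so it falls below the threshold with vanishing
probability. The estimated rank differs from `r` only if some eigenvalue is misclassified, and
a union bound over the finitely many indices finishes the proof.
-/

namespace ENNReal

theorem tendsto_nhds_zero_of_eventually_le_ofReal {α : Type*} {l : Filter α} {u : α → ENNReal}
    (h : ∀ δ : ℝ, 0 < δ → ∀ᶠ x in l, u x ≤ ENNReal.ofReal δ) : Tendsto u l (nhds 0) := by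
  refine ENNReal.tendsto_nhds_zero.2 fun ε hε => ?_
  obtain ⟨δ, -, hδ0, hδε⟩ := ENNReal.lt_iff_exists_real_btwn.1 hε
  exact (h δ (ENNReal.ofReal_pos.1 hδ0)).mono fun x hx => hx.trans hδε.le

end ENNReal

section

variable {Ω : Type*} [MeasurableSpace Ω] {P : Measure Ω}

theorem tendsto_measure_iUnion_of_tendsto_zero {ι α : Type*} [Fintype ι] {l : Filter α}
    {s : α → ι → Set Ω} (hs : ∀ i, Tendsto (fun x => P (s x i)) l (nhds 0)) :
    Tendsto (fun x => P (⋃ i, s x i)) l (nhds 0) := by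
  have hsum : Tendsto (fun x => ∑ i, P (s x i)) l (nhds 0) := by
    simpa using tendsto_finsetSum Finset.univ fun i _ => hs i
  exact tendsto_of_tendsto_of_tendsto_of_le_of_le tendsto_const_nhds hsum
    (fun _ => bot_le) fun x => measure_iUnion_fintype_le P (s x)

theorem tendsto_measure_threshold_le_of_isBigO_inv {X : ℕ → Ω → ℝ} {t : ℕ → ℝ}
    (hX : ∀ ε > 0, ∃ C : ℝ, ∀ᶠ n : ℕ in atTop,
      P {ω | C ≤ (n : ℝ) * |X n ω|} ≤ ENNReal.ofReal ε)
    (ht : Tendsto (fun n : ℕ => (n : ℝ) * t n) atTop atTop) :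
    Tendsto (fun n => P {ω | t n ≤ X n ω}) atTop (nhds 0) := by
  refine ENNReal.tendsto_nhds_zero_of_eventually_le_ofReal fun ε hε => ?_
  obtain ⟨C, hC⟩ := hX ε hε
  filter_upwards [hC, ht.eventually_ge_atTop C] with n hn hCt
  refine (measure_mono fun ω (hω : t n ≤ X n ω) => ?_).trans hn
  have hn0 : (0 : ℝ) ≤ n := n.cast_nonneg
  calc C ≤ n * t n := hCt
    _ ≤ n * X n ω := mul_le_mul_of_nonneg_left hω hn0
    _ ≤ n * |X n ω| := mul_le_mul_of_nonneg_left (le_abs_self _) hn0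

theorem tendsto_measure_lt_threshold_of_tendstoInMeasure {α : Type*} {l : Filter α}
    {X : α → Ω → ℝ} {c a : ℝ} {t : α → ℝ}
    (hX : TendstoInMeasure P X l fun _ => c) (ht : Tendsto t l (nhds a)) (hac : a < c) :
    Tendsto (fun x => P {ω | X x ω < t x}) l (nhds 0) := by
  set δ := (c - a) / 2 with hδ_def
  have hδ : 0 < δ := by positivity
  refine tendsto_of_tendsto_of_tendsto_of_le_of_le' tendsto_const_nhds
    (tendstoInMeasure_iff_dist.1 hX δ hδ) (Eventually.of_forall fun _ => bot_le) ?_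
  filter_upwards [ht.eventually_le_const (show a < c - δ by linarith)] with x htx
  refine measure_mono fun ω (hω : X x ω < t x) => ?_
  show δ ≤ dist (X x ω) c
  rw [Real.dist_eq]
  linarith [neg_abs_le (X x ω - c)]

end

theorem Finset.card_filter_ne_subset_iUnion {Ω ι : Type*} [Fintype ι] (p : Ω → ι → Prop)
    [∀ ω, DecidablePred (p ω)] (q : ι → Prop) [DecidablePred q] :
    {ω | (Finset.univ.filter (p ω)).card ≠ (Finset.univ.filter q).card} ⊆
      ⋃ i, {ω | ¬(p ω i ↔ q i)} := by
  intro ω hω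
  by_contra h
  simp only [Set.mem_iUnion, Set.mem_ofPred_eq, not_exists, not_not] at h
  exact hω (congrArg Finset.card (Finset.filter_congr fun i _ => h i))

theorem tendsto_natCast_mul_rpow_neg_atTop {b : ℝ} (hb : b < 1) :
    Tendsto (fun n : ℕ => (n : ℝ) * (n : ℝ) ^ (-b)) atTop atTop := by
  refine ((tendsto_rpow_atTop (sub_pos.2 hb)).comp tendsto_natCast_atTop_atTop).congr' ?_
  filter_upwards [eventually_gt_atTop 0] with n hn
  have hn' : (0 : ℝ) < n := Nat.cast_pos.2 hn
  simp [sub_eq_add_neg, Real.rpow_add hn']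

theorem stmt_13_general {Ω : Type*} [MeasurableSpace Ω] (P : Measure Ω)
    {m : ℕ} (lam : ℕ → Ω → Fin m → ℝ) (lam0 : Fin m → ℝ)
    (hnn : ∀ i, 0 ≤ lam0 i)
    (b : ℝ) (hb : 1 / 2 < b ∧ b < 1)
    (hzero : ∀ i, lam0 i = 0 → ∀ ε > 0, ∃ C : ℝ, ∀ᶠ n : ℕ in atTop,
      P {ω | C ≤ (n : ℝ) * |lam n ω i|} ≤ ENNReal.ofReal ε)
    (hpos : ∀ i, lam0 i ≠ 0 →
      TendstoInMeasure P (fun n ω => lam n ω i) atTop (fun _ => lam0 i))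
    (r : ℕ) (hr : r = (Finset.univ.filter (fun i => lam0 i ≠ 0)).card) :
    Tendsto
      (fun n : ℕ => P {ω |
        (Finset.univ.filter (fun i => (n : ℝ) ^ (-b) ≤ lam n ω i)).card ≠ r})
      atTop (nhds 0) := by
  subst hr
  refine tendsto_of_tendsto_of_tendsto_of_le_of_le tendsto_const_nhds
    (tendsto_measure_iUnion_of_tendsto_zero fun i => ?_) (fun _ => bot_le)
    fun n => measure_mono (Finset.card_filter_ne_subset_iUnion _ _)
  by_cases h0 : lam0 i = 0
  · simpa [h0] using tendsto_measure_threshold_le_of_isBigO_inv (hzero i h0)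
      (tendsto_natCast_mul_rpow_neg_atTop hb.2)
  · have hthreshold : Tendsto (fun n : ℕ => (n : ℝ) ^ (-b)) atTop (nhds 0) :=
      (tendsto_rpow_neg_atTop (by linarith [hb.1])).comp tendsto_natCast_atTop_atTop
    simpa [h0] using tendsto_measure_lt_threshold_of_tendstoInMeasure (hpos i h0) hthreshold
      (lt_of_le_of_ne (hnn i) (Ne.symm h0))

/-- Consistency of the hard-thresholding rank estimator: if the sample eigenvalues
corresponding to zero population eigenvalues are `O_P(1/n)` and the others converge
in probability to their positive limits, then the number of sample eigenvalues
exceeding the threshold `n^{-b}` (for fixed `b ∈ (1/2, 1)`) converges in probability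
to the number `r` of nonzero population eigenvalues. -/
theorem stmt_13 {Ω : Type*} [MeasurableSpace Ω] (P : Measure Ω) [IsProbabilityMeasure P]
    {m : ℕ} (lam : ℕ → Ω → Fin m → ℝ) (lam0 : Fin m → ℝ)
    (hdesc : ∀ n ω, Antitone (lam n ω)) (hdesc0 : Antitone lam0)
    (hnn : ∀ i, 0 ≤ lam0 i)
    (b : ℝ) (hb : 1 / 2 < b ∧ b < 1)
    (hzero : ∀ i, lam0 i = 0 → ∀ ε > 0, ∃ C : ℝ, ∀ᶠ n : ℕ in atTop,
      P {ω | C ≤ (n : ℝ) * |lam n ω i|} ≤ ENNReal.ofReal ε)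
    (hpos : ∀ i, lam0 i ≠ 0 →
      TendstoInMeasure P (fun n ω => lam n ω i) atTop (fun _ => lam0 i))
    (r : ℕ) (hr : r = (Finset.univ.filter (fun i => lam0 i ≠ 0)).card) :
    Tendsto
      (fun n : ℕ => P {ω |
        (Finset.univ.filter (fun i => (n : ℝ) ^ (-b) ≤ lam n ω i)).card ≠ r})
      atTop (nhds 0) :=
  stmt_13_general P lam lam0 hnn b hb hzero hpos r hr
end

section
/- Let M be an m×q real matrix of rank r and K = MM'. If M̂_n is a sequence of random m×q matrices with √n·vec(M̂_n − M) converging in distribution (hence √n(M̂_n − M) = O_P(1)), then each eigenvalue λ̂_i of M̂_n M̂_n' for i = r+1,...,m (descending order) satisfies λ̂_i = O_P(1/n). -/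
/-!
Order the eigenvalues of `Â Â'` decreasingly, with orthonormal eigenvectors `v₀, …, v_{m-1}`.
If `rank M ≤ i`, then `ker M'` (dimension `≥ m - i`) meets the orthogonal complement of
`v_{i+1}, …, v_{m-1}` (dimension `≥ i + 1`) in some `x ≠ 0`, and
`λ_i ‖x‖² ≤ ‖Â' x‖² = ‖(Â - M)' x‖² ≤ ‖Â - M‖_F² ‖x‖²`.
With `Â = M̂_n` this gives `n λ̂_i ≤ ∑_{k,j} (√n |M̂_n - M|_{kj})²`, a finite sum of squares of
`O_P(1)` variables, hence `O_P(1)`.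
-/

open Matrix MeasureTheory Filter

namespace Matrix

variable {n : Type*} [Fintype n]

theorem exists_ne_zero_mulVec_eq_zero_of_rank_add_lt {K : Type*} [Field K]
    {l₁ l₂ : Type*} [Fintype l₁] [Fintype l₂] (A : Matrix l₁ n K) (B : Matrix l₂ n K)
    (h : A.rank + B.rank < Fintype.card n) : ∃ x ≠ 0, A *ᵥ x = 0 ∧ B *ᵥ x = 0 := by
  have hA := A.mulVecLin.finrank_range_add_finrank_ker
  have hB := B.mulVecLin.finrank_range_add_finrank_ker
  have hnd : ¬ Disjoint (LinearMap.ker A.mulVecLin) (LinearMap.ker B.mulVecLin) := fun hd => by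
    have := Submodule.finrank_add_finrank_le_of_disjoint hd
    rw [Module.finrank_fintype_fun_eq_card] at hA hB this
    exact absurd h (by unfold Matrix.rank; omega)
  simp only [Submodule.disjoint_def, LinearMap.mem_ker, mulVecLin_apply, not_forall] at hnd
  obtain ⟨x, hAx, hBx, hx0⟩ := hnd
  exact ⟨x, hx0, hAx, hBx⟩

theorem IsHermitian.mul_dotProduct_self_le_dotProduct_mulVec [DecidableEq n]
    {H : Matrix n n ℝ} (hH : H.IsHermitian) {c : ℝ} {x : n → ℝ}
    (hc : ∀ k, ⇑(hH.eigenvectorBasis k) ⬝ᵥ x ≠ 0 → c ≤ hH.eigenvalues k) :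
    c * (x ⬝ᵥ x) ≤ x ⬝ᵥ (H *ᵥ x) := by
  set b := hH.eigenvectorBasis
  have hparseval : ∀ y, x ⬝ᵥ y = ∑ k, (b k ⬝ᵥ x) * (b k ⬝ᵥ y) := fun y => by
    simpa [EuclideanSpace.inner_eq_star_dotProduct, dotProduct_comm, eq_comm] using
      b.sum_inner_mul_inner (WithLp.toLp 2 x) (WithLp.toLp 2 y)
  have heig : ∀ k, b k ⬝ᵥ (H *ᵥ x) = hH.eigenvalues k * (b k ⬝ᵥ x) := fun k => by
    have hT : Hᵀ = H := by simpa only [conjTranspose_eq_transpose_of_trivial] using hH.eq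
    rw [dotProduct_mulVec, show ⇑(b k) ᵥ* H = H *ᵥ b k by rw [← vecMul_transpose, hT],
      hH.mulVec_eigenvectorBasis, smul_dotProduct, smul_eq_mul]
  calc c * (x ⬝ᵥ x) = ∑ k, c * (b k ⬝ᵥ x) ^ 2 := by
        rw [hparseval x, Finset.mul_sum]; simp only [sq]
    _ ≤ ∑ k, hH.eigenvalues k * (b k ⬝ᵥ x) ^ 2 := Finset.sum_le_sum fun k _ => by
        by_cases hk : b k ⬝ᵥ x = 0
        · simp [hk]
        · exact mul_le_mul_of_nonneg_right (hc k hk) (sq_nonneg _)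
    _ = x ⬝ᵥ (H *ᵥ x) := by
        rw [hparseval (H *ᵥ x)]; simp only [heig]; congr 1; ext k; ring

theorem dotProduct_mul_conjTranspose_mulVec {m : Type*} [Fintype m] (A : Matrix m n ℝ)
    (x : m → ℝ) : x ⬝ᵥ ((A * Aᴴ) *ᵥ x) = (Aᴴ *ᵥ x) ⬝ᵥ (Aᴴ *ᵥ x) := by
  rw [← mulVec_mulVec, dotProduct_mulVec, conjTranspose_eq_transpose_of_trivial,
    ← mulVec_transpose]

theorem conjTranspose_mulVec_dotProduct_self_le {m : Type*} [Fintype m] (B : Matrix m n ℝ)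
    (x : m → ℝ) : (Bᴴ *ᵥ x) ⬝ᵥ (Bᴴ *ᵥ x) ≤ (∑ k, ∑ j, B k j ^ 2) * (x ⬝ᵥ x) := by
  simp only [dotProduct, mulVec, conjTranspose_apply, star_trivial, ← sq]
  calc ∑ j, (∑ k, B k j * x k) ^ 2 ≤ ∑ j, (∑ k, B k j ^ 2) * ∑ k, x k ^ 2 :=
        Finset.sum_le_sum fun j _ => Finset.sum_mul_sq_le_sq_mul_sq _ _ _
    _ = (∑ k, ∑ j, B k j ^ 2) * ∑ k, x k ^ 2 := by rw [← Finset.sum_mul, Finset.sum_comm]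

end Matrix

theorem eigenvalue_le_sum_sq_sub_of_rank_le {m : ℕ} {n : Type*} [Fintype n]
    (A M : Matrix (Fin m) n ℝ) {lam : Fin m → ℝ} (hlam : Antitone lam) {σ : Equiv.Perm (Fin m)}
    (hσ : lam = (isHermitian_mul_conjTranspose_self A).eigenvalues ∘ σ) {i : Fin m}
    (hi : M.rank ≤ i) : lam i ≤ ∑ k, ∑ j, (A k j - M k j) ^ 2 := by
  set hH := isHermitian_mul_conjTranspose_self A
  let B : Matrix {j : Fin m // i < j} (Fin m) ℝ := of fun j => hH.eigenvectorBasis (σ j)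
  have hrank : Mᴴ.rank + B.rank < Fintype.card (Fin m) := by
    have hB := B.rank_le_card_height
    rw [Fintype.card_subtype, Finset.filter_lt_eq_Ioi, Fin.card_Ioi] at hB
    rw [rank_conjTranspose, Fintype.card_fin]
    omega
  obtain ⟨x, hx0, hMx, hBx⟩ := exists_ne_zero_mulVec_eq_zero_of_rank_add_lt Mᴴ B hrank
  have hlower : lam i * (x ⬝ᵥ x) ≤ x ⬝ᵥ ((A * Aᴴ) *ᵥ x) := by
    refine hH.mul_dotProduct_self_le_dotProduct_mulVec fun k hk => ?_
    obtain ⟨j, rfl⟩ := σ.surjective k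
    rcases le_or_gt j i with hj | hj
    · exact (hlam hj).trans_eq (congrFun hσ j)
    · exact absurd (congrFun hBx ⟨j, hj⟩) hk
  have hupper : x ⬝ᵥ ((A * Aᴴ) *ᵥ x) ≤ (∑ k, ∑ j, (A k j - M k j) ^ 2) * (x ⬝ᵥ x) := by
    have hAx : Aᴴ *ᵥ x = (A - M)ᴴ *ᵥ x := by rw [conjTranspose_sub, sub_mulVec, hMx, sub_zero]
    rw [dotProduct_mul_conjTranspose_mulVec, hAx]
    exact conjTranspose_mulVec_dotProduct_self_le (A - M) x
  have hx : 0 < x ⬝ᵥ x := by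
    simpa only [star_trivial] using dotProduct_self_star_pos_iff.mpr hx0
  exact le_of_mul_le_mul_right (hlower.trans hupper) hx

-- For nonnegative `X`, this is `X n = O_P(1)`.
def BoundedAboveInProbability {Ω : Type*} [MeasurableSpace Ω] (P : Measure Ω)
    (X : ℕ → Ω → ℝ) : Prop :=
  ∀ ε > 0, ∃ C : ℝ, ∀ᶠ n : ℕ in atTop, P {ω | C ≤ X n ω} ≤ ENNReal.ofReal ε

namespace BoundedAboveInProbability

variable {Ω : Type*} [MeasurableSpace Ω] {P : Measure Ω} {X Y : ℕ → Ω → ℝ}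

theorem mono (hX : BoundedAboveInProbability P X) (hYX : ∀ n ω, Y n ω ≤ X n ω) :
    BoundedAboveInProbability P Y := fun ε hε => by
  obtain ⟨C, hC⟩ := hX ε hε
  exact ⟨C, hC.mono fun n hn => (measure_mono fun ω hω => le_trans hω (hYX n ω)).trans hn⟩

theorem zero : BoundedAboveInProbability P 0 :=
  fun _ _ => ⟨1, .of_forall fun _ =>
    (measure_mono (t := ∅) fun _ h => absurd h (by norm_num)).trans (by simp)⟩

theorem add (hX : BoundedAboveInProbability P X) (hY : BoundedAboveInProbability P Y) :
    BoundedAboveInProbability P (X + Y) := fun ε hε => by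
  obtain ⟨C₁, h₁⟩ := hX (ε / 2) (half_pos hε)
  obtain ⟨C₂, h₂⟩ := hY (ε / 2) (half_pos hε)
  refine ⟨C₁ + C₂, ?_⟩
  filter_upwards [h₁, h₂] with n hn₁ hn₂
  have hsub : {ω | C₁ + C₂ ≤ (X + Y) n ω} ⊆ {ω | C₁ ≤ X n ω} ∪ {ω | C₂ ≤ Y n ω} := by
    intro ω hω
    by_contra hcon
    simp only [Set.mem_union, Set.mem_ofPred_eq, not_or, not_le, Pi.add_apply] at hω hcon
    linarith [hcon.1, hcon.2]
  calc P {ω | C₁ + C₂ ≤ (X + Y) n ω}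
      ≤ P {ω | C₁ ≤ X n ω} + P {ω | C₂ ≤ Y n ω} := (measure_mono hsub).trans (measure_union_le _ _)
    _ ≤ ENNReal.ofReal (ε / 2) + ENNReal.ofReal (ε / 2) := add_le_add hn₁ hn₂
    _ = ENNReal.ofReal ε := by rw [← ENNReal.ofReal_add (by positivity) (by positivity), add_halves]

theorem sum {ι : Type*} (s : Finset ι) {X : ι → ℕ → Ω → ℝ}
    (hX : ∀ a ∈ s, BoundedAboveInProbability P (X a)) :
    BoundedAboveInProbability P (fun n ω => ∑ a ∈ s, X a n ω) := by
  simpa only [← Finset.sum_apply] using Finset.sum_induction X _ (fun _ _ => add) zero hX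

theorem pow (hX : BoundedAboveInProbability P X) (hX₀ : ∀ n ω, 0 ≤ X n ω) {k : ℕ} (hk : k ≠ 0) :
    BoundedAboveInProbability P (fun n ω => X n ω ^ k) := fun ε hε => by
  obtain ⟨C, hC⟩ := hX ε hε
  refine ⟨max C 0 ^ k, hC.mono fun n hn => (measure_mono fun ω hω => ?_).trans hn⟩
  exact (le_max_left C 0).trans ((pow_le_pow_iff_left₀ (le_max_right C 0) (hX₀ n ω) hk).mp hω)

end BoundedAboveInProbability

theorem stmt_14_general {Ω : Type*} [MeasurableSpace Ω] (P : Measure Ω)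
    {m q : ℕ} (M : Matrix (Fin m) (Fin q) ℝ) (r : ℕ) (hr : M.rank = r)
    (Mh : ℕ → Ω → Matrix (Fin m) (Fin q) ℝ)
    (hbound : ∀ i j, ∀ ε > 0, ∃ C : ℝ, ∀ᶠ n : ℕ in atTop,
      P {ω | C ≤ Real.sqrt n * |Mh n ω i j - M i j|} ≤ ENNReal.ofReal ε)
    (lam : ℕ → Ω → Fin m → ℝ)
    (hlam : ∀ n ω, Antitone (lam n ω) ∧ ∃ σ : Equiv.Perm (Fin m),
      lam n ω = (Matrix.isHermitian_mul_conjTranspose_self (Mh n ω)).eigenvalues ∘ σ)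
    (i : Fin m) (hi : r ≤ (i : ℕ)) :
    ∀ ε > 0, ∃ C : ℝ, ∀ᶠ n : ℕ in atTop,
      P {ω | C ≤ (n : ℝ) * |lam n ω i|} ≤ ENNReal.ofReal ε := by
  have hdev : BoundedAboveInProbability P
      (fun n ω => ∑ k, ∑ j, (Real.sqrt n * |Mh n ω k j - M k j|) ^ 2) :=
    .sum _ fun k _ => .sum _ fun j _ =>
      BoundedAboveInProbability.pow (hbound k j) (fun _ _ => by positivity) two_ne_zero
  refine hdev.mono fun n ω => ?_
  obtain ⟨hanti, σ, hσ⟩ := hlam n ω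
  have hlam₀ : 0 ≤ lam n ω i := by
    rw [hσ]; exact (posSemidef_self_mul_conjTranspose _).eigenvalues_nonneg _
  calc (n : ℝ) * |lam n ω i| ≤ n * ∑ k, ∑ j, (Mh n ω k j - M k j) ^ 2 := by
        rw [abs_of_nonneg hlam₀]
        gcongr
        exact eigenvalue_le_sum_sq_sub_of_rank_le _ M hanti hσ (hr ▸ hi)
    _ = ∑ k, ∑ j, (Real.sqrt n * |Mh n ω k j - M k j|) ^ 2 := by
        simp only [Finset.mul_sum, mul_pow, sq_abs, Real.sq_sqrt (Nat.cast_nonneg n)]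

/-- Robin–Smith fast rate: if `√n (M̂_n − M)` is bounded in probability entrywise and
`M` has rank `r`, then the eigenvalues of `M̂_n M̂_n'` beyond the `r`-th (in descending
order) are `O_P(1/n)`. -/
theorem stmt_14 {Ω : Type*} [MeasurableSpace Ω] (P : Measure Ω) [IsProbabilityMeasure P]
    {m q : ℕ} (M : Matrix (Fin m) (Fin q) ℝ) (r : ℕ) (hr : M.rank = r)
    (Mh : ℕ → Ω → Matrix (Fin m) (Fin q) ℝ)
    (hbound : ∀ i j, ∀ ε > 0, ∃ C : ℝ, ∀ᶠ n : ℕ in atTop,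
      P {ω | C ≤ Real.sqrt n * |Mh n ω i j - M i j|} ≤ ENNReal.ofReal ε)
    (lam : ℕ → Ω → Fin m → ℝ)
    (hlam : ∀ n ω, Antitone (lam n ω) ∧ ∃ σ : Equiv.Perm (Fin m),
      lam n ω = (Matrix.isHermitian_mul_conjTranspose_self (Mh n ω)).eigenvalues ∘ σ)
    (i : Fin m) (hi : r ≤ (i : ℕ)) :
    ∀ ε > 0, ∃ C : ℝ, ∀ᶠ n : ℕ in atTop,
      P {ω | C ≤ (n : ℝ) * |lam n ω i|} ≤ ENNReal.ofReal ε :=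
  stmt_14_general P M r hr Mh hbound lam hlam i hi
end
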